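/- For a random variable l with triangular distribution on [0, S] (mode S/2) and the conditional pickup distance defined by E[l_p | l] = ∫_0^l (1 - 2x²/Φ²)^N dx where Φ = K·S, the unconditional expectation equals E[l_p] = Σ_{i=0}^{N} C(N,i)·(-1)^i·(2^{i+2} - 2^{-i})·S / ((2i+1)(2i+2)(2i+3)·K^{2i}). -/

import Mathlib

open intervalIntegral Finset

set_option maxHeartbeats 1000000 in


/-- The unconditional expected pickup distance, for `l` triangular on `[0,S]` with mode
`S/2`, `Φ = K·S`, and conditional pickup distance `∫_0^l (1-2x²/Φ²)^N dx`, equals the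
stated finite binomial sum. -/
theorem stmt7 (S : ℝ) (hS : 0 < S) (K : ℕ) (hK : 1 ≤ K) (N : ℕ) (Φ : ℝ)
    (hΦ : Φ = (K : ℝ) * S) :
    (∫ l in (0:ℝ)..(S / 2),
        (∫ x in (0:ℝ)..l, (1 - 2 * x ^ 2 / Φ ^ 2) ^ N) * (4 * l / S ^ 2)) +
    (∫ l in (S / 2)..S,
        (∫ x in (0:ℝ)..l, (1 - 2 * x ^ 2 / Φ ^ 2) ^ N) * (4 * (S - l) / S ^ 2)) =
    ∑ i ∈ Finset.range (N + 1),
      (N.choose i : ℝ) * (-1) ^ i * (2 ^ (i + 2) - ((2:ℝ)⁻¹) ^ i) * S /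
        ((2 * i + 1) * (2 * i + 2) * (2 * i + 3) * (K : ℝ) ^ (2 * i)) := by
  have hS' : S ≠ 0 := hS.ne'
  have hK0 : (0:ℝ) < (K:ℝ) := by exact_mod_cast Nat.pos_of_ne_zero (by omega)
  have hK' : (K:ℝ) ≠ 0 := hK0.ne'
  set c : ℕ → ℝ := fun i => (N.choose i : ℝ) * (-(2/Φ^2))^i with hc
  have hinner : ∀ l : ℝ, (∫ x in (0:ℝ)..l, (1 - 2 * x ^ 2 / Φ ^ 2) ^ N)
      = ∑ i ∈ range (N+1), c i * (l^(2*i+1) / (2*i+1)) := by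
    intro l
    have hpt : ∀ x : ℝ, (1 - 2 * x ^ 2 / Φ ^ 2) ^ N
        = ∑ i ∈ range (N+1), c i * x^(2*i) := by
      intro x
      have h := add_pow (-(2 * x ^ 2 / Φ ^ 2)) 1 N
      calc (1 - 2 * x ^ 2 / Φ ^ 2) ^ N = (-(2 * x ^ 2 / Φ ^ 2) + 1) ^ N := by ring_nf
        _ = ∑ k ∈ range (N+1), (-(2 * x ^ 2 / Φ ^ 2))^k * 1^(N-k) * (N.choose k : ℝ) := h
        _ = _ := by
            refine Finset.sum_congr rfl fun k _ => ?_
            rw [one_pow, show -(2 * x ^ 2 / Φ ^ 2) = (-(2/Φ^2)) * x^2 by ring,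
              mul_pow, ← pow_mul, hc]
            ring
    rw [intervalIntegral.integral_congr (g := fun x => ∑ i ∈ range (N+1),
          c i * x^(2*i)) (fun x _ => hpt x)]
    rw [intervalIntegral.integral_finset_sum
      (fun i _ => (Continuous.intervalIntegrable (by fun_prop) _ _))]
    refine Finset.sum_congr rfl fun i _ => ?_
    rw [intervalIntegral.integral_const_mul, integral_pow]
    push_cast
    ring
  -- first outer integral
  have h1 : (∫ l in (0:ℝ)..(S / 2),
        (∫ x in (0:ℝ)..l, (1 - 2 * x ^ 2 / Φ ^ 2) ^ N) * (4 * l / S ^ 2))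
      = ∑ i ∈ range (N+1), (c i * 4 / ((2*i+1) * S^2)) * ((S/2)^(2*i+3) / (2*i+3)) := by
    rw [intervalIntegral.integral_congr (g := fun l => ∑ i ∈ range (N+1),
          (c i * 4 / ((2*(i:ℝ)+1) * S^2)) * l^(2*i+2))
        (fun l _ => by
          rw [hinner l, Finset.sum_mul]
          refine Finset.sum_congr rfl fun i _ => ?_
          have h21 : (2*(i:ℝ)+1) ≠ 0 := by positivity
          field_simp
          ring)]
    rw [intervalIntegral.integral_finset_sum
      (fun i _ => (Continuous.intervalIntegrable (by fun_prop) _ _))]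
    refine Finset.sum_congr rfl fun i _ => ?_
    rw [intervalIntegral.integral_const_mul, integral_pow]
    push_cast
    ring
  -- second outer integral
  have h2 : (∫ l in (S / 2)..S,
        (∫ x in (0:ℝ)..l, (1 - 2 * x ^ 2 / Φ ^ 2) ^ N) * (4 * (S - l) / S ^ 2))
      = ∑ i ∈ range (N+1),
          ((c i * 4 / ((2*(i:ℝ)+1) * S)) * ((S^(2*i+2) - (S/2)^(2*i+2)) / (2*i+2))
           - (c i * 4 / ((2*(i:ℝ)+1) * S^2)) * ((S^(2*i+3) - (S/2)^(2*i+3)) / (2*i+3))) := by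
    rw [intervalIntegral.integral_congr (g := fun l => ∑ i ∈ range (N+1),
          ((c i * 4 / ((2*(i:ℝ)+1) * S)) * l^(2*i+1)
           - (c i * 4 / ((2*(i:ℝ)+1) * S^2)) * l^(2*i+2)))
        (fun l _ => by
          rw [hinner l, Finset.sum_mul]
          refine Finset.sum_congr rfl fun i _ => ?_
          have h21 : (2*(i:ℝ)+1) ≠ 0 := by positivity
          field_simp
          ring)]
    rw [intervalIntegral.integral_finset_sum
      (fun i _ => (Continuous.intervalIntegrable (by fun_prop) _ _))]
    refine Finset.sum_congr rfl fun i _ => ?_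
    rw [intervalIntegral.integral_sub
        (Continuous.intervalIntegrable (by fun_prop) _ _)
        (Continuous.intervalIntegrable (by fun_prop) _ _),
      intervalIntegral.integral_const_mul, intervalIntegral.integral_const_mul,
      integral_pow, integral_pow]
    push_cast
    ring
  rw [h1, h2, ← Finset.sum_add_distrib]
  refine Finset.sum_congr rfl fun i _ => ?_
  have h21 : (2*(i:ℝ)+1) ≠ 0 := by positivity
  have h22 : (2*(i:ℝ)+2) ≠ 0 := by positivity
  have h23 : (2*(i:ℝ)+3) ≠ 0 := by positivity
  have hΦ' : Φ ≠ 0 := by rw [hΦ]; positivity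
  rw [hc]
  simp only
  rw [hΦ]
  have hexp : (-(2/((K:ℝ)*S)^2))^i = (-1)^i * 2^i / ((K:ℝ)^(2*i) * S^(2*i)) := by
    rw [neg_pow, div_pow, mul_pow, mul_pow, ← pow_mul, ← pow_mul]; ring
  rw [hexp]
  have hhalf : ((2:ℝ)⁻¹)^i = 1 / 2^i := by
    rw [inv_pow, one_div]
  rw [hhalf]
  have hdp : ∀ m : ℕ, (S/2)^m = S^m / 2^m := fun m => div_pow S 2 m
  simp only [hdp]
  field_simp
  ring
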